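/- arXiv:2210.07019 — 3 statements merged into one kernel-verified Lean document; each statement's English description precedes it below -/
import Mathlib

section
/- Let μ be a finite Borel measure on ℝ^d. Then the function θ ↦ dim_F^θ μ is non-decreasing and concave on [0,1]; in particular it is continuous on (0,1]. Moreover, for every non-empty set X ⊆ ℝ^d, the function θ ↦ dim_F^θ X is non-decreasing on [0,1] and continuous on (0,1]. -/
/-!
Off the origin, `J_{s,θ}(μ)^{1/θ} = ∫ (|μ̂(z)|² |z|^s)^{1/θ} |z|^{-d} dz`, so the energy is the
`L^{1/θ}(|z|^{-d} dz)`-norm of `|μ̂|² |z|^s` (its sup norm for `θ = 0`), and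
`|μ̂|² |z|^{l s₀ + (1-l) s₁}` is the weighted geometric mean of the functions at `s₀` and `s₁`.
Hölder's inequality therefore gives
`J_{l s₀ + (1-l) s₁, l θ₀ + (1-l) θ₁} ≤ J_{s₀,θ₀}^l J_{s₁,θ₁}^{1-l}`,
i.e. concavity of `θ ↦ dim_F^θ μ`; interpolating with the always finite `J_{0,0}` gives
`t dim_F^θ μ ≤ dim_F^{tθ} μ`. Monotonicity is proved separately: near the origin `|μ̂| ≤ μ(ℝ^d)`
and `s > 0` make the integral converge, and away from it Hölder's inequality against `|z|^e` with
`e < -d` passes from the exponent `1/θ` to the smaller `1/θ'`. A non-decreasing `f ≥ 0` with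
`t f(θ) ≤ f(tθ)` is continuous on `(0, ∞)`, and both properties pass to `dim_F^θ X` through the
supremum over measures.
-/

open MeasureTheory Filter Set
open scoped ENNReal NNReal

noncomputable section

abbrev Ed (d : ℕ) := EuclideanSpace ℝ (Fin d)

noncomputable def ftm {d : ℕ} (μ : Measure (Ed d)) (z : Ed d) : ℂ :=
  ∫ x, Complex.exp (Complex.I * (-2 * Real.pi * (inner ℝ z x : ℝ))) ∂μ

noncomputable def energyJ {d : ℕ} (μ : Measure (Ed d)) (s θ : ℝ) : ℝ≥0∞ :=
  if θ = 0 then ⨆ z : Ed d, ENNReal.ofReal (‖ftm μ z‖ ^ 2 * ‖z‖ ^ s)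
  else (∫⁻ z : Ed d, ENNReal.ofReal (‖ftm μ z‖ ^ (2 / θ) * ‖z‖ ^ (s / θ - d))) ^ θ

noncomputable def dimF {d : ℕ} (μ : Measure (Ed d)) (θ : ℝ) : ℝ≥0∞ :=
  ⨆ (s : NNReal) (_ : energyJ μ s θ < ⊤), (s : ℝ≥0∞)

def sptm {d : ℕ} (μ : Measure (Ed d)) : Set (Ed d) := {x | ∀ r > 0, 0 < μ (Metric.ball x r)}

noncomputable def dimFS {d : ℕ} (X : Set (Ed d)) (θ : ℝ) : ℝ≥0∞ :=
  ⨆ (μ : Measure (Ed d)) (_ : IsFiniteMeasure μ) (_ : μ ≠ 0) (_ : sptm μ ⊆ X),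
    min (dimF μ θ) (d : ℝ≥0∞)

open Metric
open scoped Topology

section NormRpow

variable {E : Type*} [NormedAddCommGroup E] [NormedSpace ℝ E] [FiniteDimensional ℝ E]
  [MeasurableSpace E] [BorelSpace E] (μ : Measure E) [μ.IsAddHaarMeasure]

theorem lintegral_ball_enorm_rpow_lt_top [Nontrivial E] {v : ℝ}
    (hv : -(Module.finrank ℝ E : ℝ) < v) : ∫⁻ x in ball 0 1, ‖x‖ₑ ^ v ∂μ < ⊤ := by
  have hint : IntegrableOn (fun x : E => ‖x‖ ^ v) (ball 0 1) μ := by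
    refine integrableOn_ball_of_norm_le_rpow (C := 1) (α := -v) Module.finrank_pos (by linarith)
      (ae_of_all _ fun x => ?_) (measurable_norm.pow_const v).aestronglyMeasurable
    rw [one_mul, neg_neg, Real.norm_of_nonneg (by positivity)]
  refine lt_of_le_of_lt (lintegral_mono_ae ?_) hint.2
  filter_upwards [ae_restrict_of_ae (Measure.ae_ne μ 0)] with x hx
  rw [Real.enorm_of_nonneg (by positivity), ← ENNReal.ofReal_rpow_of_pos (norm_pos_iff.2 hx),
    ofReal_norm]

theorem lintegral_compl_ball_enorm_rpow_lt_top {v : ℝ} (hv : v < -(Module.finrank ℝ E : ℝ)) :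
    ∫⁻ x in (ball 0 1)ᶜ, ‖x‖ₑ ^ v ∂μ < ⊤ := by
  have hv0 : v < 0 := hv.trans_le (by simp)
  have hbound : ∀ x ∈ (ball (0 : E) 1)ᶜ,
      ‖x‖ₑ ^ v ≤ ENNReal.ofReal (2 ^ (-v)) * ENNReal.ofReal ((1 + ‖x‖) ^ (-(-v))) := by
    intro x hx
    have hx1 : 1 ≤ ‖x‖ := by simpa using hx
    rw [neg_neg, ← ENNReal.ofReal_mul (by positivity), ← ofReal_norm,
      ENNReal.ofReal_rpow_of_pos (by linarith)]
    refine ENNReal.ofReal_le_ofReal ?_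
    calc ‖x‖ ^ v ≤ ((1 + ‖x‖) / 2) ^ v :=
          Real.rpow_le_rpow_of_nonpos (by positivity) (by linarith) hv0.le
      _ = 2 ^ (-v) * (1 + ‖x‖) ^ v := by
          rw [Real.div_rpow (by positivity) zero_le_two, Real.rpow_neg zero_le_two]
          ring
  calc ∫⁻ x in (ball 0 1)ᶜ, ‖x‖ₑ ^ v ∂μ
      ≤ ∫⁻ x, ENNReal.ofReal (2 ^ (-v)) * ENNReal.ofReal ((1 + ‖x‖) ^ (-(-v))) ∂μ :=
        (setLIntegral_mono' measurableSet_ball.compl hbound).trans (setLIntegral_le_lintegral _ _)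
    _ = ENNReal.ofReal (2 ^ (-v)) * ∫⁻ x, ENNReal.ofReal ((1 + ‖x‖) ^ (-(-v))) ∂μ :=
        lintegral_const_mul' _ _ ENNReal.ofReal_ne_top
    _ < ⊤ := ENNReal.mul_lt_top ENNReal.ofReal_lt_top (finite_integral_one_add_norm (by linarith))

end NormRpow

theorem continuousOn_Ioi_of_monotoneOn_of_mul_le {f : ℝ → ℝ≥0∞}
    (hmono : MonotoneOn f (Ioi 0))
    (hmul : ∀ θ > 0, ∀ t ∈ Ioc (0 : ℝ) 1, ENNReal.ofReal t * f θ ≤ f (t * θ)) :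
    ContinuousOn f (Ioi 0) := by
  intro x (hx : 0 < x)
  have hlin : Tendsto (fun θ => ENNReal.ofReal (θ / x) * f x) (𝓝[Ioi 0] x) (𝓝 (f x)) := by
    have : Tendsto (fun θ => ENNReal.ofReal (θ / x)) (𝓝 x) (𝓝 (ENNReal.ofReal (x / x))) :=
      (ENNReal.continuous_ofReal.tendsto _).comp (tendsto_id.div_const x)
    rw [div_self hx.ne', ENNReal.ofReal_one] at this
    simpa using ENNReal.Tendsto.mul_const (this.mono_left nhdsWithin_le_nhds) (Or.inl one_ne_zero)
  have hratio : ∀ a > 0, ∀ b ≥ a, ENNReal.ofReal (a / b) * f b ≤ f a := fun a ha b hab => by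
    have hb : 0 < b := ha.trans_le hab
    simpa [div_mul_cancel₀ _ hb.ne'] using
      hmul b hb (a / b) ⟨by positivity, (div_le_one hb).2 hab⟩
  refine tendsto_of_tendsto_of_tendsto_of_le_of_le' (min_self (f x) ▸ hlin.min tendsto_const_nhds)
    (max_self (f x) ▸ hlin.max tendsto_const_nhds) ?_ ?_
  all_goals refine eventually_nhdsWithin_of_forall fun θ (hθ : 0 < θ) => ?_
  · rcases le_total θ x with hθx | hxθ
    · exact min_le_of_left_le (hratio θ hθ x hθx)
    · exact min_le_of_right_le (hmono hx hθ hxθ)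
  · rcases le_total θ x with hθx | hxθ
    · exact le_max_of_le_right (hmono hθ hx hθx)
    · refine le_max_of_le_left ?_
      calc f θ = ENNReal.ofReal (θ / x) * (ENNReal.ofReal (x / θ) * f θ) := by
            rw [← mul_assoc, ← ENNReal.ofReal_mul (by positivity),
              show θ / x * (x / θ) = 1 by field_simp, ENNReal.ofReal_one, one_mul]
        _ ≤ ENNReal.ofReal (θ / x) * f x := by
            gcongr
            exact hratio x hx θ hxθ

variable {d : ℕ}

theorem ftm_eq_charFun (μ : Measure (Ed d)) (z : Ed d) :
    ftm μ z = charFun μ ((-2 * Real.pi) • z) := by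
  simp only [ftm, charFun_apply, real_inner_smul_right, real_inner_comm z]
  congr 1 with x
  push_cast
  ring_nf

theorem measurable_ftm (μ : Measure (Ed d)) [SFinite μ] : Measurable (ftm μ) := by
  simp_rw [funext (ftm_eq_charFun μ)]
  exact measurable_charFun.comp (measurable_const_smul _)

theorem enorm_ftm_le (μ : Measure (Ed d)) [IsFiniteMeasure μ] (z : Ed d) :
    ‖ftm μ z‖ₑ ≤ μ univ := by
  rw [ftm_eq_charFun, ← ofReal_norm, ← ENNReal.ofReal_toReal (measure_ne_top μ univ)]
  exact ENNReal.ofReal_le_ofReal (norm_charFun_le _)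

def ftmMonomial (μ : Measure (Ed d)) (p q : ℝ) (z : Ed d) : ℝ≥0∞ :=
  ‖ftm μ z‖ₑ ^ p * ‖z‖ₑ ^ q

section ftmMonomial

variable {μ : Measure (Ed d)} {p p' q q' : ℝ} {z : Ed d}

theorem measurable_ftmMonomial [SFinite μ] : Measurable (ftmMonomial μ p q) :=
  ((measurable_ftm μ).enorm.pow_const p).mul (measurable_enorm.pow_const q)

theorem ftmMonomial_rpow {a : ℝ} (ha : 0 ≤ a) :
    ftmMonomial μ p q z ^ a = ftmMonomial μ (p * a) (q * a) z := by
  simp only [ftmMonomial, ENNReal.mul_rpow_of_nonneg _ _ ha, ENNReal.rpow_mul]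

theorem ftmMonomial_mul (hp : 0 ≤ p) (hp' : 0 ≤ p') (hz : z ≠ 0 ∨ 0 ≤ q ∧ 0 ≤ q') :
    ftmMonomial μ p q z * ftmMonomial μ p' q' z = ftmMonomial μ (p + p') (q + q') z := by
  have hnorm : ‖z‖ₑ ^ (q + q') = ‖z‖ₑ ^ q * ‖z‖ₑ ^ q' := by
    rcases hz with hz | ⟨hq, hq'⟩
    · exact ENNReal.rpow_add _ _ (enorm_ne_zero.2 hz) enorm_ne_top
    · exact ENNReal.rpow_add_of_nonneg _ _ hq hq'
  rw [ftmMonomial, ftmMonomial, ftmMonomial, ENNReal.rpow_add_of_nonneg _ _ hp hp', hnorm]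
  ring

theorem ftmMonomial_zero_left : ftmMonomial μ 0 q z = ‖z‖ₑ ^ q := by
  simp [ftmMonomial]

theorem ftmMonomial_le [IsFiniteMeasure μ] (hp : 0 ≤ p) :
    ftmMonomial μ p q z ≤ μ univ ^ p * ‖z‖ₑ ^ q := by
  unfold ftmMonomial
  gcongr
  exact enorm_ftm_le μ z

end ftmMonomial

theorem energyJ_zero {μ : Measure (Ed d)} {s : ℝ} (hs : 0 ≤ s) :
    energyJ μ s 0 = ⨆ z, ftmMonomial μ 2 s z := by
  simp only [energyJ, ↓reduceIte, ftmMonomial]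
  refine iSup_congr fun z => ?_
  rw [ENNReal.ofReal_mul (by positivity), ← ENNReal.ofReal_rpow_of_nonneg (norm_nonneg _) hs,
    ENNReal.ofReal_pow (norm_nonneg _), ofReal_norm, ofReal_norm, ENNReal.rpow_two]

theorem nontrivial_ed (hd : 1 ≤ d) : Nontrivial (Ed d) :=
  have : Nonempty (Fin d) := ⟨⟨0, hd⟩⟩
  inferInstance

theorem energyJ_of_pos (hd : 1 ≤ d) {μ : Measure (Ed d)} {s θ : ℝ} (hθ : 0 < θ) :
    energyJ μ s θ = (∫⁻ z, ftmMonomial μ (2 / θ) (s / θ - d) z) ^ θ := by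
  have := nontrivial_ed hd
  rw [energyJ, if_neg hθ.ne']
  congr 1
  refine lintegral_congr_ae ((Measure.ae_ne volume 0).mono fun z hz => ?_)
  dsimp only
  rw [ftmMonomial, ENNReal.ofReal_mul (by positivity),
    ← ENNReal.ofReal_rpow_of_nonneg (norm_nonneg _) (by positivity),
    ← ENNReal.ofReal_rpow_of_pos (norm_pos_iff.2 hz), ofReal_norm, ofReal_norm]

theorem energyJ_lt_top_iff (hd : 1 ≤ d) {μ : Measure (Ed d)} {s θ : ℝ} (hθ : 0 < θ) :
    energyJ μ s θ < ⊤ ↔ ∫⁻ z, ftmMonomial μ (2 / θ) (s / θ - d) z < ⊤ := by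
  rw [energyJ_of_pos hd hθ, ENNReal.rpow_lt_top_iff_of_pos hθ]

theorem energyJ_zero_zero_lt_top (μ : Measure (Ed d)) [IsFiniteMeasure μ] :
    energyJ μ 0 0 < ⊤ := by
  rw [energyJ_zero le_rfl]
  calc ⨆ z, ftmMonomial μ 2 0 z ≤ μ univ ^ (2 : ℝ) := iSup_le fun z => by
        simpa only [ENNReal.rpow_zero, mul_one] using ftmMonomial_le (μ := μ) (q := 0) (z := z)
          zero_le_two
    _ < ⊤ := ENNReal.rpow_lt_top_of_nonneg zero_le_two (measure_ne_top μ univ)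

section Interpolation

variable {μ : Measure (Ed d)} {s₀ s₁ θ₀ θ₁ l : ℝ}

theorem energyJ_zero_interp (hs₀ : 0 ≤ s₀) (hs₁ : 0 ≤ s₁) (hl : l ∈ Icc (0 : ℝ) 1) :
    energyJ μ (l * s₀ + (1 - l) * s₁) 0 ≤ energyJ μ s₀ 0 ^ l * energyJ μ s₁ 0 ^ (1 - l) := by
  have hl' : 0 ≤ 1 - l := sub_nonneg.2 hl.2
  rw [energyJ_zero (add_nonneg (mul_nonneg hl.1 hs₀) (mul_nonneg hl' hs₁)), energyJ_zero hs₀,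
    energyJ_zero hs₁]
  refine iSup_le fun z => ?_
  have hsplit : ftmMonomial μ 2 (l * s₀ + (1 - l) * s₁) z =
      ftmMonomial μ 2 s₀ z ^ l * ftmMonomial μ 2 s₁ z ^ (1 - l) := by
    rw [ftmMonomial_rpow hl.1, ftmMonomial_rpow hl',
      ftmMonomial_mul (mul_nonneg zero_le_two hl.1) (mul_nonneg zero_le_two hl')
        (Or.inr ⟨mul_nonneg hs₀ hl.1, mul_nonneg hs₁ hl'⟩)]
    ring_nf
  rw [hsplit]
  exact mul_le_mul' (ENNReal.rpow_le_rpow (le_iSup (ftmMonomial μ 2 s₀) z) hl.1)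
    (ENNReal.rpow_le_rpow (le_iSup (ftmMonomial μ 2 s₁) z) hl')

theorem energyJ_interp_zero_left [SFinite μ] (hd : 1 ≤ d) (hs₀ : 0 ≤ s₀) (hθ₁ : 0 < θ₁)
    (hl₀ : 0 ≤ l) (hl₁ : l < 1) :
    energyJ μ (l * s₀ + (1 - l) * s₁) ((1 - l) * θ₁) ≤
      energyJ μ s₀ 0 ^ l * energyJ μ s₁ θ₁ ^ (1 - l) := by
  set θ := (1 - l) * θ₁ with hθ_def
  have hθ : 0 < θ := mul_pos (sub_pos.2 hl₁) hθ₁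
  have hl₁' : 1 - l ≠ 0 := (sub_pos.2 hl₁).ne'
  have := nontrivial_ed hd
  set S₀ := ⨆ z, ftmMonomial μ 2 s₀ z
  set I₁ := ∫⁻ z, ftmMonomial μ (2 / θ₁) (s₁ / θ₁ - d) z
  have hpoint : ∀ z, z ≠ 0 → ftmMonomial μ (2 / θ) ((l * s₀ + (1 - l) * s₁) / θ - d) z ≤
      S₀ ^ (l / θ) * ftmMonomial μ (2 / θ₁) (s₁ / θ₁ - d) z := by
    intro z hz
    have hsplit : ftmMonomial μ (2 / θ) ((l * s₀ + (1 - l) * s₁) / θ - d) z =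
        ftmMonomial μ 2 s₀ z ^ (l / θ) * ftmMonomial μ (2 / θ₁) (s₁ / θ₁ - d) z := by
      rw [ftmMonomial_rpow (by positivity),
        ftmMonomial_mul (by positivity) (by positivity) (Or.inl hz)]
      congr 2 <;> (rw [hθ_def]; field_simp; ring)
    rw [hsplit]
    gcongr
    exact le_iSup (ftmMonomial μ 2 s₀) z
  have hint : ∫⁻ z, ftmMonomial μ (2 / θ) ((l * s₀ + (1 - l) * s₁) / θ - d) z ≤
      S₀ ^ (l / θ) * I₁ := by
    rw [← lintegral_const_mul _ measurable_ftmMonomial]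
    exact lintegral_mono_ae ((Measure.ae_ne volume 0).mono hpoint)
  calc energyJ μ (l * s₀ + (1 - l) * s₁) θ
      = (∫⁻ z, ftmMonomial μ (2 / θ) ((l * s₀ + (1 - l) * s₁) / θ - d) z) ^ θ :=
        energyJ_of_pos hd hθ
    _ ≤ (S₀ ^ (l / θ) * I₁) ^ θ := ENNReal.rpow_le_rpow hint hθ.le
    _ = S₀ ^ l * (I₁ ^ θ₁) ^ (1 - l) := by
        rw [ENNReal.mul_rpow_of_nonneg _ _ hθ.le, ← ENNReal.rpow_mul, ← ENNReal.rpow_mul,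
          div_mul_cancel₀ _ hθ.ne', hθ_def, mul_comm θ₁]
    _ = energyJ μ s₀ 0 ^ l * energyJ μ s₁ θ₁ ^ (1 - l) := by
        rw [energyJ_zero hs₀, energyJ_of_pos hd hθ₁]

theorem energyJ_interp_of_pos [SFinite μ] (hd : 1 ≤ d) (hθ₀ : 0 < θ₀) (hθ₁ : 0 < θ₁)
    (hl : l ∈ Icc (0 : ℝ) 1) :
    energyJ μ (l * s₀ + (1 - l) * s₁) (l * θ₀ + (1 - l) * θ₁) ≤
      energyJ μ s₀ θ₀ ^ l * energyJ μ s₁ θ₁ ^ (1 - l) := by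
  have hl' : 0 ≤ 1 - l := sub_nonneg.2 hl.2
  set θ := l * θ₀ + (1 - l) * θ₁ with hθ_def
  have hθ : 0 < θ := by
    rcases hl.1.eq_or_lt with rfl | hl0
    · simpa [θ] using hθ₁
    · exact add_pos_of_pos_of_nonneg (mul_pos hl0 hθ₀) (mul_nonneg hl' hθ₁.le)
  have := nontrivial_ed hd
  have ha : 0 ≤ l * θ₀ / θ := by have := hl.1; positivity
  have hb : 0 ≤ (1 - l) * θ₁ / θ := div_nonneg (mul_nonneg hl' hθ₁.le) hθ.le
  have hab : l * θ₀ / θ + (1 - l) * θ₁ / θ = 1 := by rw [← add_div, div_self hθ.ne']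
  set I₀ := ∫⁻ z, ftmMonomial μ (2 / θ₀) (s₀ / θ₀ - d) z
  set I₁ := ∫⁻ z, ftmMonomial μ (2 / θ₁) (s₁ / θ₁ - d) z
  have hpoint : ∀ z, z ≠ 0 → ftmMonomial μ (2 / θ) ((l * s₀ + (1 - l) * s₁) / θ - d) z =
      ftmMonomial μ (2 / θ₀) (s₀ / θ₀ - d) z ^ (l * θ₀ / θ) *
        ftmMonomial μ (2 / θ₁) (s₁ / θ₁ - d) z ^ ((1 - l) * θ₁ / θ) := by
    intro z hz
    rw [ftmMonomial_rpow ha, ftmMonomial_rpow hb,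
      ftmMonomial_mul (by positivity) (by positivity) (Or.inl hz)]
    congr 2
    · field_simp
      ring
    · field_simp
      ring
  have hint : ∫⁻ z, ftmMonomial μ (2 / θ) ((l * s₀ + (1 - l) * s₁) / θ - d) z ≤
      I₀ ^ (l * θ₀ / θ) * I₁ ^ ((1 - l) * θ₁ / θ) :=
    (lintegral_congr_ae ((Measure.ae_ne volume 0).mono hpoint)).trans_le
      (ENNReal.lintegral_mul_norm_pow_le measurable_ftmMonomial.aemeasurable
        measurable_ftmMonomial.aemeasurable ha hb hab)
  calc energyJ μ (l * s₀ + (1 - l) * s₁) θ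
      = (∫⁻ z, ftmMonomial μ (2 / θ) ((l * s₀ + (1 - l) * s₁) / θ - d) z) ^ θ :=
        energyJ_of_pos hd hθ
    _ ≤ (I₀ ^ (l * θ₀ / θ) * I₁ ^ ((1 - l) * θ₁ / θ)) ^ θ := ENNReal.rpow_le_rpow hint hθ.le
    _ = (I₀ ^ θ₀) ^ l * (I₁ ^ θ₁) ^ (1 - l) := by
        rw [ENNReal.mul_rpow_of_nonneg _ _ hθ.le, ← ENNReal.rpow_mul, ← ENNReal.rpow_mul,
          ← ENNReal.rpow_mul, ← ENNReal.rpow_mul, div_mul_cancel₀ _ hθ.ne',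
          div_mul_cancel₀ _ hθ.ne', mul_comm l, mul_comm (1 - l)]
    _ = energyJ μ s₀ θ₀ ^ l * energyJ μ s₁ θ₁ ^ (1 - l) := by
        rw [energyJ_of_pos hd hθ₀, energyJ_of_pos hd hθ₁]

theorem energyJ_interp [SFinite μ] (hd : 1 ≤ d) (hs₀ : 0 ≤ s₀) (hs₁ : 0 ≤ s₁) (hθ₀ : 0 ≤ θ₀)
    (hθ₁ : 0 ≤ θ₁) (hl : l ∈ Icc (0 : ℝ) 1) :
    energyJ μ (l * s₀ + (1 - l) * s₁) (l * θ₀ + (1 - l) * θ₁) ≤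
      energyJ μ s₀ θ₀ ^ l * energyJ μ s₁ θ₁ ^ (1 - l) := by
  rcases hl.1.eq_or_lt with rfl | hl₀
  · simp
  rcases hl.2.eq_or_lt with rfl | hl₁
  · simp
  rcases hθ₀.eq_or_lt with rfl | hθ₀ <;> rcases hθ₁.eq_or_lt with rfl | hθ₁
  · simpa using energyJ_zero_interp hs₀ hs₁ hl
  · simpa using energyJ_interp_zero_left hd hs₀ hθ₁ hl₀.le hl₁
  · have := energyJ_interp_zero_left (μ := μ) (s₁ := s₀) hd hs₁ hθ₀ (sub_nonneg.2 hl.2)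
      (sub_lt_self 1 hl₀)
    rw [sub_sub_cancel, mul_comm (energyJ μ s₁ 0 ^ _)] at this
    convert this using 2 <;> ring
  · exact energyJ_interp_of_pos hd hθ₀ hθ₁ hl

end Interpolation

section Monotone

variable {μ : Measure (Ed d)} {a b s u : ℝ}

theorem setLIntegral_ball_ftmMonomial_lt_top [IsFiniteMeasure μ] (hd : 1 ≤ d) {p q : ℝ}
    (hp : 0 ≤ p) (hq : -(d : ℝ) < q) : ∫⁻ z in ball 0 1, ftmMonomial μ p q z < ⊤ := by
  have := nontrivial_ed hd
  calc ∫⁻ z in ball 0 1, ftmMonomial μ p q z ≤ ∫⁻ z in ball 0 1, μ univ ^ p * ‖z‖ₑ ^ q :=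
        setLIntegral_mono' measurableSet_ball fun z _ => ftmMonomial_le hp
    _ = μ univ ^ p * ∫⁻ z in ball 0 1, ‖z‖ₑ ^ q :=
        lintegral_const_mul' _ _ (ENNReal.rpow_ne_top_of_nonneg hp (measure_ne_top μ univ))
    _ < ⊤ := ENNReal.mul_lt_top (ENNReal.rpow_lt_top_of_nonneg hp (measure_ne_top μ univ))
        (lintegral_ball_enorm_rpow_lt_top volume (by rwa [finrank_euclideanSpace_fin]))

theorem setLIntegral_compl_ball_lt_top_of_energyJ_zero (hb : 0 < b) (hs : 0 ≤ s) (hus : u < s)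
    (h : energyJ μ s 0 < ⊤) :
    ∫⁻ z in (ball 0 1)ᶜ, ftmMonomial μ (2 / b) (u / b - d) z < ⊤ := by
  set e := (u - s) / b - d
  have he : e < -(d : ℝ) := by
    have : (u - s) / b < 0 := div_neg_of_neg_of_pos (sub_neg.2 hus) hb
    linarith
  have hpoint : ∀ z ∈ (ball (0 : Ed d) 1)ᶜ,
      ftmMonomial μ (2 / b) (u / b - d) z ≤ energyJ μ s 0 ^ b⁻¹ * ‖z‖ₑ ^ e := by
    intro z hz
    have hz0 : z ≠ 0 := by rintro rfl; simp at hz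
    have hsplit : ftmMonomial μ (2 / b) (u / b - d) z = ftmMonomial μ 2 s z ^ b⁻¹ * ‖z‖ₑ ^ e := by
      rw [← ftmMonomial_zero_left, ftmMonomial_rpow (inv_nonneg.2 hb.le),
        ftmMonomial_mul (by positivity) le_rfl (Or.inl hz0)]
      congr 2 <;> ring
    rw [hsplit, energyJ_zero hs]
    gcongr
    exact le_iSup (ftmMonomial μ 2 s) z
  calc ∫⁻ z in (ball 0 1)ᶜ, ftmMonomial μ (2 / b) (u / b - d) z
      ≤ ∫⁻ z in (ball 0 1)ᶜ, energyJ μ s 0 ^ b⁻¹ * ‖z‖ₑ ^ e :=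
        setLIntegral_mono' measurableSet_ball.compl hpoint
    _ = energyJ μ s 0 ^ b⁻¹ * ∫⁻ z in (ball 0 1)ᶜ, ‖z‖ₑ ^ e :=
        lintegral_const_mul' _ _ (ENNReal.rpow_ne_top_of_nonneg (by positivity) h.ne)
    _ < ⊤ := ENNReal.mul_lt_top (ENNReal.rpow_lt_top_of_nonneg (by positivity) h.ne)
        (lintegral_compl_ball_enorm_rpow_lt_top volume (by rwa [finrank_euclideanSpace_fin]))

theorem setLIntegral_compl_ball_lt_top_of_energyJ_pos [SFinite μ] (hd : 1 ≤ d) (ha : 0 < a)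
    (hab : a < b) (hus : u < s) (h : energyJ μ s a < ⊤) :
    ∫⁻ z in (ball 0 1)ᶜ, ftmMonomial μ (2 / b) (u / b - d) z < ⊤ := by
  have hb : 0 < b := ha.trans hab
  have hba : b - a ≠ 0 := (sub_pos.2 hab).ne'
  set e := (u - s) / (b - a) - d with he_def
  have he : e < -(d : ℝ) := by
    have : (u - s) / (b - a) < 0 := div_neg_of_neg_of_pos (sub_neg.2 hus) (sub_pos.2 hab)
    linarith
  have hp : 0 ≤ a / b := by positivity
  have hq : 0 ≤ 1 - a / b := sub_nonneg.2 ((div_le_one hb).2 hab.le)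
  have hpoint : EqOn (ftmMonomial μ (2 / b) (u / b - d))
      (fun z => ftmMonomial μ (2 / a) (s / a - d) z ^ (a / b) * ftmMonomial μ 0 e z ^ (1 - a / b))
      (ball 0 1)ᶜ := by
    intro z hz
    have hz0 : z ≠ 0 := by rintro rfl; simp at hz
    dsimp only
    rw [ftmMonomial_rpow hp, ftmMonomial_rpow hq,
      ftmMonomial_mul (by positivity) (by simp) (Or.inl hz0)]
    congr 2
    · field_simp
      ring
    · rw [he_def]
      field_simp
      ring
  have hfin₀ : ∫⁻ z in (ball 0 1)ᶜ, ftmMonomial μ (2 / a) (s / a - d) z ≠ ⊤ :=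
    ne_top_of_le_ne_top ((energyJ_lt_top_iff hd ha).1 h).ne (setLIntegral_le_lintegral _ _)
  have hfin₁ : ∫⁻ z in (ball 0 1)ᶜ, ftmMonomial μ 0 e z ≠ ⊤ := by
    simp_rw [ftmMonomial_zero_left]
    exact (lintegral_compl_ball_enorm_rpow_lt_top volume (by rwa [finrank_euclideanSpace_fin])).ne
  calc ∫⁻ z in (ball 0 1)ᶜ, ftmMonomial μ (2 / b) (u / b - d) z
      = ∫⁻ z in (ball 0 1)ᶜ,
          ftmMonomial μ (2 / a) (s / a - d) z ^ (a / b) * ftmMonomial μ 0 e z ^ (1 - a / b) :=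
        setLIntegral_congr_fun measurableSet_ball.compl hpoint
    _ ≤ (∫⁻ z in (ball 0 1)ᶜ, ftmMonomial μ (2 / a) (s / a - d) z) ^ (a / b) *
          (∫⁻ z in (ball 0 1)ᶜ, ftmMonomial μ 0 e z) ^ (1 - a / b) :=
        ENNReal.lintegral_mul_norm_pow_le measurable_ftmMonomial.aemeasurable
          measurable_ftmMonomial.aemeasurable hp hq (add_sub_cancel _ _)
    _ < ⊤ := ENNReal.mul_lt_top (ENNReal.rpow_lt_top_of_nonneg hp hfin₀)
        (ENNReal.rpow_lt_top_of_nonneg hq hfin₁)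

theorem energyJ_lt_top_of_lt [IsFiniteMeasure μ] (hd : 1 ≤ d) (ha : 0 ≤ a) (hab : a < b)
    (hu : 0 < u) (hus : u < s) (h : energyJ μ s a < ⊤) : energyJ μ u b < ⊤ := by
  have hb : 0 < b := ha.trans_lt hab
  rw [energyJ_lt_top_iff hd hb, ← lintegral_add_compl _ measurableSet_ball (A := ball 0 1)]
  refine ENNReal.add_lt_top.2 ⟨setLIntegral_ball_ftmMonomial_lt_top hd (by positivity) ?_, ?_⟩
  · have : 0 < u / b := by positivity
    linarith
  rcases ha.eq_or_lt with rfl | ha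
  · exact setLIntegral_compl_ball_lt_top_of_energyJ_zero hb (hu.trans hus).le hus h
  · exact setLIntegral_compl_ball_lt_top_of_energyJ_pos hd ha hab hus h

end Monotone

section FourierDimension

variable {μ : Measure (Ed d)} {θ θ₀ θ₁ l : ℝ}

theorem le_dimF {s : ℝ} (hs : 0 ≤ s) (h : energyJ μ s θ < ⊤) : ENNReal.ofReal s ≤ dimF μ θ := by
  lift s to ℝ≥0 using hs
  rw [ENNReal.ofReal_coe_nnreal]
  exact le_iSup₂ (f := fun (s : ℝ≥0) (_ : energyJ μ s θ < ⊤) => (s : ℝ≥0∞)) s h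

theorem le_dimF_of_forall_lt {c : ℝ≥0∞}
    (h : ∀ u : ℝ, 0 < u → ENNReal.ofReal u < c → energyJ μ u θ < ⊤) : c ≤ dimF μ θ :=
  ENNReal.le_of_forall_pos_nnreal_lt fun r hr hrc => by
    simpa using le_dimF r.coe_nonneg (h r hr (by simpa using hrc))

theorem dimF_monotoneOn [IsFiniteMeasure μ] (hd : 1 ≤ d) : MonotoneOn (dimF μ) (Ici 0) := by
  intro a ha b _ hab
  rcases hab.eq_or_lt with rfl | hab
  · rfl
  refine iSup₂_le fun s hs => le_dimF_of_forall_lt fun u hu hus => ?_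
  rw [← ENNReal.ofReal_coe_nnreal, ENNReal.ofReal_lt_ofReal_iff_of_nonneg hu.le] at hus
  exact energyJ_lt_top_of_lt hd ha hab hu hus hs

theorem energyJ_interp_lt_top [SFinite μ] (hd : 1 ≤ d) {s₀ s₁ : ℝ} (hs₀ : 0 ≤ s₀) (hs₁ : 0 ≤ s₁)
    (hθ₀ : 0 ≤ θ₀) (hθ₁ : 0 ≤ θ₁) (hl : l ∈ Icc (0 : ℝ) 1) (h₀ : energyJ μ s₀ θ₀ < ⊤)
    (h₁ : energyJ μ s₁ θ₁ < ⊤) :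
    energyJ μ (l * s₀ + (1 - l) * s₁) (l * θ₀ + (1 - l) * θ₁) < ⊤ :=
  (energyJ_interp hd hs₀ hs₁ hθ₀ hθ₁ hl).trans_lt <| ENNReal.mul_lt_top
    (ENNReal.rpow_lt_top_of_nonneg hl.1 h₀.ne)
    (ENNReal.rpow_lt_top_of_nonneg (sub_nonneg.2 hl.2) h₁.ne)

theorem ofReal_mul_le_dimF [IsFiniteMeasure μ] (hd : 1 ≤ d) {s₁ : ℝ} (hs₁ : 0 ≤ s₁)
    (hθ₀ : 0 ≤ θ₀) (hθ₁ : 0 ≤ θ₁) (hl : l ∈ Icc (0 : ℝ) 1) (h : energyJ μ s₁ θ₁ < ⊤) :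
    ENNReal.ofReal ((1 - l) * s₁) ≤ dimF μ (l * θ₀ + (1 - l) * θ₁) := by
  have hl' : 0 ≤ 1 - l := sub_nonneg.2 hl.2
  have hscaled : energyJ μ ((1 - l) * s₁) ((1 - l) * θ₁) < ⊤ := by
    simpa using energyJ_interp_lt_top hd le_rfl hs₁ le_rfl hθ₁ hl
      (energyJ_zero_zero_lt_top μ) h
  calc ENNReal.ofReal ((1 - l) * s₁) ≤ dimF μ ((1 - l) * θ₁) :=
        le_dimF (mul_nonneg hl' hs₁) hscaled
    _ ≤ dimF μ (l * θ₀ + (1 - l) * θ₁) :=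
        dimF_monotoneOn hd (mul_nonneg hl' hθ₁)
          (add_nonneg (mul_nonneg hl.1 hθ₀) (mul_nonneg hl' hθ₁))
          (le_add_of_nonneg_left (mul_nonneg hl.1 hθ₀))

theorem dimF_concave [IsFiniteMeasure μ] (hd : 1 ≤ d) (hθ₀ : 0 ≤ θ₀) (hθ₁ : 0 ≤ θ₁)
    (hl : l ∈ Icc (0 : ℝ) 1) :
    ENNReal.ofReal l * dimF μ θ₀ + ENNReal.ofReal (1 - l) * dimF μ θ₁ ≤
      dimF μ (l * θ₀ + (1 - l) * θ₁) := by
  have hl' : 0 ≤ 1 - l := sub_nonneg.2 hl.2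
  rw [dimF.eq_1 μ θ₀, dimF.eq_1 μ θ₁, ENNReal.mul_iSup, ENNReal.mul_iSup]
  refine ENNReal.iSup_add_iSup_le fun s₀ s₁ => ?_
  have hs₀ : (s₀ : ℝ≥0∞) = ENNReal.ofReal s₀ := ENNReal.ofReal_coe_nnreal.symm
  have hs₁ : (s₁ : ℝ≥0∞) = ENNReal.ofReal s₁ := ENNReal.ofReal_coe_nnreal.symm
  by_cases h₀ : energyJ μ s₀ θ₀ < ⊤ <;> by_cases h₁ : energyJ μ s₁ θ₁ < ⊤ <;>
    simp only [h₀, h₁, iSup_pos, iSup_neg, not_false_eq_true, bot_eq_zero', mul_zero, add_zero,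
      zero_add]
  · rw [hs₀, hs₁, ← ENNReal.ofReal_mul hl.1, ← ENNReal.ofReal_mul hl',
      ← ENNReal.ofReal_add (mul_nonneg hl.1 s₀.coe_nonneg) (mul_nonneg hl' s₁.coe_nonneg)]
    exact le_dimF (add_nonneg (mul_nonneg hl.1 s₀.coe_nonneg) (mul_nonneg hl' s₁.coe_nonneg))
      (energyJ_interp_lt_top hd s₀.coe_nonneg s₁.coe_nonneg hθ₀ hθ₁ hl h₀ h₁)
  · have := ofReal_mul_le_dimF hd s₀.coe_nonneg hθ₁ hθ₀ ⟨hl', sub_le_self 1 hl.1⟩ h₀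
    rwa [sub_sub_cancel, add_comm, ENNReal.ofReal_mul hl.1, ← hs₀] at this
  · rw [hs₁, ← ENNReal.ofReal_mul hl']
    exact ofReal_mul_le_dimF hd s₁.coe_nonneg hθ₀ hθ₁ hl h₁
  · exact zero_le

theorem ofReal_mul_dimF_le [IsFiniteMeasure μ] (hd : 1 ≤ d) {t : ℝ} (hθ : 0 ≤ θ)
    (ht : t ∈ Icc (0 : ℝ) 1) : ENNReal.ofReal t * dimF μ θ ≤ dimF μ (t * θ) :=
  calc ENNReal.ofReal t * dimF μ θ
      ≤ ENNReal.ofReal t * dimF μ θ + ENNReal.ofReal (1 - t) * dimF μ 0 := le_self_add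
    _ ≤ dimF μ (t * θ + (1 - t) * 0) := dimF_concave hd hθ le_rfl ht
    _ = dimF μ (t * θ) := by rw [mul_zero, add_zero]

end FourierDimension

section FourierDimensionOfSets

variable {θ : ℝ}

theorem dimFS_monotoneOn (hd : 1 ≤ d) (X : Set (Ed d)) : MonotoneOn (dimFS X) (Ici 0) :=
  fun _ ha _ hb hab => iSup_mono fun _ => iSup_mono fun _ => iSup₂_mono fun _ _ =>
    min_le_min_right _ (dimF_monotoneOn hd ha hb hab)

theorem ofReal_mul_dimFS_le (hd : 1 ≤ d) (X : Set (Ed d)) {t : ℝ} (hθ : 0 ≤ θ)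
    (ht : t ∈ Icc (0 : ℝ) 1) : ENNReal.ofReal t * dimFS X θ ≤ dimFS X (t * θ) := by
  simp only [dimFS, ENNReal.mul_iSup]
  refine iSup_mono fun _ => iSup_mono fun _ => iSup₂_mono fun _ _ => le_min ?_ ?_
  · exact (mul_le_mul_right (min_le_left _ _) _).trans (ofReal_mul_dimF_le hd hθ ht)
  · exact (mul_le_mul_right (min_le_right _ _) _).trans
      (mul_le_of_le_one_left' (ENNReal.ofReal_le_one.2 ht.2))

end FourierDimensionOfSets

/-- For a finite Borel measure `μ` on `ℝ^d`, the Fourier spectrum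
`θ ↦ dim_F^θ μ` is non-decreasing and concave on `[0,1]`, hence continuous on `(0,1]`;
and for every non-empty set `X ⊆ ℝ^d`, `θ ↦ dim_F^θ X` is non-decreasing on `[0,1]`
and continuous on `(0,1]`. -/
theorem statement0 {d : ℕ} (hd : 1 ≤ d) (μ : Measure (Ed d)) [IsFiniteMeasure μ] :
    (MonotoneOn (fun θ => dimF μ θ) (Set.Icc (0:ℝ) 1) ∧
      (∀ θ₀ ∈ Set.Icc (0:ℝ) 1, ∀ θ₁ ∈ Set.Icc (0:ℝ) 1, ∀ l ∈ Set.Icc (0:ℝ) 1,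
        ENNReal.ofReal l * dimF μ θ₀ + ENNReal.ofReal (1 - l) * dimF μ θ₁ ≤
          dimF μ (l * θ₀ + (1 - l) * θ₁)) ∧
      ContinuousOn (fun θ => dimF μ θ) (Set.Ioc (0:ℝ) 1)) ∧
    (∀ X : Set (Ed d), X.Nonempty →
      MonotoneOn (fun θ => dimFS X θ) (Set.Icc (0:ℝ) 1) ∧
      ContinuousOn (fun θ => dimFS X θ) (Set.Ioc (0:ℝ) 1)) := by
  have hdimF_cont : ContinuousOn (dimF μ) (Ioi 0) :=
    continuousOn_Ioi_of_monotoneOn_of_mul_le ((dimF_monotoneOn hd).mono Ioi_subset_Ici_self)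
      fun _ hθ _ ht => ofReal_mul_dimF_le hd hθ.le (Ioc_subset_Icc_self ht)
  have hdimFS_cont (X : Set (Ed d)) : ContinuousOn (dimFS X) (Ioi 0) :=
    continuousOn_Ioi_of_monotoneOn_of_mul_le ((dimFS_monotoneOn hd X).mono Ioi_subset_Ici_self)
      fun _ hθ _ ht => ofReal_mul_dimFS_le hd X hθ.le (Ioc_subset_Icc_self ht)
  refine ⟨⟨(dimF_monotoneOn hd).mono Icc_subset_Ici_self,
    fun θ₀ h₀ θ₁ h₁ l hl => dimF_concave hd h₀.1 h₁.1 hl,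
    hdimF_cont.mono Ioc_subset_Ioi_self⟩,
    fun X _ => ⟨(dimFS_monotoneOn hd X).mono Icc_subset_Ici_self,
      (hdimFS_cont X).mono Ioc_subset_Ioi_self⟩⟩

end
end

section
/- Let μ be a finite Borel measure on ℝ^d whose Fourier transform μ̂ is α-Hölder for some α ∈ (0,1]. Then the Sobolev dimension satisfies dim_S μ ≤ (1 + d/(2α))·dim_F μ + d. In particular, if dim_F μ = 0 then dim_S μ ≤ d. -/
/-!
If `J_{s,1}(μ) < ∞` with `s > d`, Hölder continuity of `μ̂` keeps `|μ̂| ≥ |μ̂(z)| / 2` on a ball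
around `z` of radius `≍ |μ̂(z)|^{1/α}`, where also `|w| ≥ |z| / 2` once `|z|` is large.
Integrating over that ball bounds `|μ̂(z)|^{2 + d/α} |z|^{s-d}` uniformly, i.e.
`|μ̂(z)|² |z|^t` is bounded for `t = (s - d) · 2α / (2α + d)`. Hence `dim_F μ ≥ t`,
and `s = (1 + d/(2α)) t + d`.
-/

open MeasureTheory Filter Set
open scoped ENNReal NNReal

noncomputable section

open Metric Module

section HolderDecay

variable {E F : Type*} [NormedAddCommGroup E] [NormedAddCommGroup F] {g : E → F} {C α q β : ℝ}

lemma half_norm_le_norm_of_holder (hg : ∀ x y, ‖g x - g y‖ ≤ C * ‖x - y‖ ^ α) {z w : E}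
    (hzw : C * ‖z - w‖ ^ α ≤ ‖g z‖ / 2) : ‖g z‖ / 2 ≤ ‖g w‖ := by
  linarith [hg z w, norm_sub_norm_le (g z) (g w)]

variable [MeasurableSpace E] [BorelSpace E] (ν : Measure E)

lemma ofReal_mul_measure_ball_le_lintegral_of_holder
    (hg : ∀ x y, ‖g x - g y‖ ≤ C * ‖x - y‖ ^ α) (hC : 0 ≤ C) (hα : 0 ≤ α) (hq : 0 ≤ q)
    (hβ : 0 ≤ β) {z : E} {r : ℝ} (hrz : r ≤ ‖z‖ / 2) (hCr : C * r ^ α ≤ ‖g z‖ / 2) :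
    ENNReal.ofReal ((‖g z‖ / 2) ^ q * (‖z‖ / 2) ^ β) * ν (ball z r)
      ≤ ∫⁻ w, ENNReal.ofReal (‖g w‖ ^ q * ‖w‖ ^ β) ∂ν := by
  calc _ = ∫⁻ _ in ball z r, ENNReal.ofReal ((‖g z‖ / 2) ^ q * (‖z‖ / 2) ^ β) ∂ν :=
        (setLIntegral_const _ _).symm
    _ ≤ ∫⁻ w in ball z r, ENNReal.ofReal (‖g w‖ ^ q * ‖w‖ ^ β) ∂ν := by
        refine setLIntegral_mono' measurableSet_ball fun w hw => ?_
        have hzw : ‖z - w‖ < r := by rwa [← dist_eq_norm, dist_comm]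
        have hgw : ‖g z‖ / 2 ≤ ‖g w‖ :=
          half_norm_le_norm_of_holder hg (hCr.trans' (by gcongr))
        have hw : ‖z‖ / 2 ≤ ‖w‖ := by linarith [norm_sub_norm_le z w]
        gcongr
    _ ≤ _ := setLIntegral_le_lintegral _ _

variable [NormedSpace ℝ E] [FiniteDimensional ℝ E] [ν.IsAddHaarMeasure]

lemma rpow_mul_rpow_le_of_holder (hg : ∀ x y, ‖g x - g y‖ ≤ C * ‖x - y‖ ^ α) (hC : 0 < C)
    (hα : 0 < α) (hq : 0 < q) (hβ : 0 ≤ β)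
    (hJ : ∫⁻ w, ENNReal.ofReal (‖g w‖ ^ q * ‖w‖ ^ β) ∂ν ≠ ⊤) {z : E}
    (hz : 2 * (‖g z‖ / (2 * C)) ^ (1 / α) ≤ ‖z‖) :
    ‖g z‖ ^ (q + finrank ℝ E / α) * ‖z‖ ^ β ≤
      2 ^ q * 2 ^ β * (2 * C) ^ (finrank ℝ E / α) *
        (∫⁻ w, ENNReal.ofReal (‖g w‖ ^ q * ‖w‖ ^ β) ∂ν).toReal / (ν (ball 0 1)).toReal := by
  set d : ℝ := (finrank ℝ E : ℝ)
  set m := ‖g z‖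
  set J := ∫⁻ w, ENNReal.ofReal (‖g w‖ ^ q * ‖w‖ ^ β) ∂ν
  have hB : 0 < (ν (ball 0 1)).toReal :=
    ENNReal.toReal_pos (measure_ball_pos ν 0 one_pos).ne' measure_ball_lt_top.ne
  rcases (norm_nonneg (g z)).eq_or_lt with hm0 | hmpos
  · rw [show m = 0 from hm0.symm, Real.zero_rpow (by positivity), zero_mul]
    positivity
  -- Hölder continuity keeps `‖g‖ ≥ m / 2` on the ball of radius `r` around `z`.
  set r := (m / (2 * C)) ^ (1 / α)
  have hr : 0 < r := by positivity
  have hCr : C * r ^ α = m / 2 := by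
    rw [← Real.rpow_mul (by positivity), one_div_mul_cancel hα.ne', Real.rpow_one]
    field_simp
  have hball := ofReal_mul_measure_ball_le_lintegral_of_holder ν hg hC.le hα.le hq.le hβ
    (r := r) (by linarith) hCr.le
  rw [Measure.addHaar_ball_of_pos ν z hr, ← mul_assoc,
    ← ENNReal.ofReal_mul (by positivity)] at hball
  have hreal := ENNReal.toReal_mono hJ hball
  rw [ENNReal.toReal_mul, ENNReal.toReal_ofReal (by positivity)] at hreal
  have hrd : r ^ finrank ℝ E = (m / (2 * C)) ^ (d / α) := by
    rw [← Real.rpow_natCast, ← Real.rpow_mul (by positivity), one_div_mul_eq_div]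
  rw [hrd] at hreal
  have hfactor : m ^ (q + d / α) * ‖z‖ ^ β = 2 ^ q * 2 ^ β * (2 * C) ^ (d / α) *
      ((m / 2) ^ q * (‖z‖ / 2) ^ β * (m / (2 * C)) ^ (d / α)) := by
    rw [Real.rpow_add hmpos, Real.div_rpow hmpos.le two_pos.le,
      Real.div_rpow (norm_nonneg z) two_pos.le, Real.div_rpow hmpos.le (by positivity)]
    have : (0 : ℝ) < 2 ^ q := by positivity
    have : (0 : ℝ) < 2 ^ β := by positivity
    have : (0 : ℝ) < (2 * C) ^ (d / α) := by positivity
    field_simp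
  rw [hfactor, mul_div_assoc]
  gcongr
  exact (le_div_iff₀ hB).mpr hreal

theorem exists_bound_rpow_mul_rpow_of_holder (hg : ∀ x y, ‖g x - g y‖ ≤ C * ‖x - y‖ ^ α)
    (hC : 0 < C) (hα : 0 < α) (hq : 0 < q) (hβ : 0 ≤ β) {M₀ : ℝ} (hbound : ∀ z, ‖g z‖ ≤ M₀)
    (hJ : ∫⁻ w, ENNReal.ofReal (‖g w‖ ^ q * ‖w‖ ^ β) ∂ν ≠ ⊤) :
    ∃ M, ∀ z, ‖g z‖ ^ q * ‖z‖ ^ (β * (q * α / (q * α + finrank ℝ E))) ≤ M := by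
  set d : ℝ := (finrank ℝ E : ℝ)
  set p := q * α / (q * α + d)
  set A := 2 ^ q * 2 ^ β * (2 * C) ^ (d / α) *
    (∫⁻ w, ENNReal.ofReal (‖g w‖ ^ q * ‖w‖ ^ β) ∂ν).toReal / (ν (ball 0 1)).toReal
  set R₀ := 2 * (M₀ / (2 * C)) ^ (1 / α)
  have hM₀ : 0 ≤ M₀ := (norm_nonneg _).trans (hbound 0)
  refine ⟨max (M₀ ^ q * R₀ ^ (β * p)) (A ^ p), fun z => ?_⟩
  rcases le_or_gt ‖z‖ R₀ with hz | hz
  · refine le_max_of_le_left ?_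
    gcongr
    exact hbound z
  · refine le_max_of_le_right ?_
    have hlarge : 2 * (‖g z‖ / (2 * C)) ^ (1 / α) ≤ ‖z‖ := by
      refine le_trans ?_ hz.le
      dsimp only [R₀]
      gcongr
      exact hbound z
    have hexp : (q + d / α) * p = q := by
      have : 0 < q * α + d := by positivity
      dsimp only [p]
      field_simp
    calc ‖g z‖ ^ q * ‖z‖ ^ (β * p)
        = (‖g z‖ ^ (q + d / α) * ‖z‖ ^ β) ^ p := by
          rw [Real.mul_rpow (by positivity) (by positivity), ← Real.rpow_mul (norm_nonneg _),
            ← Real.rpow_mul (norm_nonneg _), hexp]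
      _ ≤ A ^ p := by
          gcongr
          exact rpow_mul_rpow_le_of_holder ν hg hC hα hq hβ hJ hlarge

end HolderDecay

lemma norm_ftm_le {d : ℕ} (μ : Measure (Ed d)) [IsFiniteMeasure μ] (z : Ed d) :
    ‖ftm μ z‖ ≤ μ.real univ := by
  simpa [ftm, Complex.norm_exp] using
    norm_integral_le_of_norm_le_const (μ := μ) (C := 1)
      (f := fun x => Complex.exp (Complex.I * (-2 * Real.pi * (inner ℝ z x : ℝ))))
      (Eventually.of_forall fun x => by simp [Complex.norm_exp])

lemma energyJ_one {d : ℕ} (μ : Measure (Ed d)) (s : ℝ) :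
    energyJ μ s 1 = ∫⁻ z, ENNReal.ofReal (‖ftm μ z‖ ^ (2 : ℝ) * ‖z‖ ^ (s - d)) := by
  simp [energyJ]

lemma energyJ_zero_lt_top_of_le {d : ℕ} {μ : Measure (Ed d)} {t M : ℝ}
    (h : ∀ z, ‖ftm μ z‖ ^ (2 : ℝ) * ‖z‖ ^ t ≤ M) : energyJ μ t 0 < ⊤ := by
  rw [energyJ, if_pos rfl]
  refine lt_of_le_of_lt (b := ENNReal.ofReal M)
    (iSup_le fun z => ENNReal.ofReal_le_ofReal ?_) ENNReal.ofReal_lt_top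
  rw [← Real.rpow_two]
  exact h z

lemma coe_le_dimF_of_energyJ_lt_top {d : ℕ} {μ : Measure (Ed d)} {θ : ℝ} {s : ℝ≥0}
    (h : energyJ μ s θ < ⊤) : (s : ℝ≥0∞) ≤ dimF μ θ :=
  le_iSup₂ (f := fun (s : ℝ≥0) (_ : energyJ μ s θ < ⊤) => (s : ℝ≥0∞)) s h

lemma ofReal_le_dimF_zero_of_energyJ_one_lt_top {d : ℕ} (μ : Measure (Ed d))
    [IsFiniteMeasure μ] {C α : ℝ} (hC : 0 < C) (hα : 0 < α)
    (hHolder : ∀ x y : Ed d, ‖ftm μ x - ftm μ y‖ ≤ C * ‖x - y‖ ^ α) {s : ℝ} (hsd : d ≤ s)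
    (hs : energyJ μ s 1 < ⊤) :
    ENNReal.ofReal ((s - d) * (2 * α / (2 * α + d))) ≤ dimF μ 0 := by
  rw [energyJ_one] at hs
  obtain ⟨M, hM⟩ := exists_bound_rpow_mul_rpow_of_holder volume hHolder hC hα two_pos
    (sub_nonneg.2 hsd) (norm_ftm_le μ) hs.ne
  rw [finrank_euclideanSpace_fin] at hM
  have ht : 0 ≤ (s - d) * (2 * α / (2 * α + d)) := by
    have := sub_nonneg.2 hsd
    positivity
  refine coe_le_dimF_of_energyJ_lt_top (energyJ_zero_lt_top_of_le (M := M) fun z => ?_)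
  simpa [Real.coe_toNNReal _ ht] using hM z

lemma ofReal_eq_one_add_ofReal_div_mul_add {a d s : ℝ} (ha : 0 < a) (hd : 0 ≤ d)
    (hsd : d ≤ s) :
    ENNReal.ofReal s =
      (1 + ENNReal.ofReal (d / a)) * ENNReal.ofReal ((s - d) * (a / (a + d)))
        + ENNReal.ofReal d := by
  have hsplit : s = (1 + d / a) * ((s - d) * (a / (a + d))) + d := by
    have : 0 < a + d := by positivity
    field_simp
    ring
  have := sub_nonneg.2 hsd
  conv_lhs => rw [hsplit]
  rw [ENNReal.ofReal_add (by positivity) hd, ENNReal.ofReal_mul (by positivity),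
    ENNReal.ofReal_add zero_le_one (by positivity), ENNReal.ofReal_one]

theorem statement4_general {d : ℕ} (μ : Measure (Ed d)) [IsFiniteMeasure μ]
    (α : ℝ) (hα : α ∈ Set.Ioc (0:ℝ) 1)
    (hHolder : ∃ C : ℝ, 0 < C ∧ ∀ x y : Ed d,
      ‖ftm μ x - ftm μ y‖ ≤ C * ‖x - y‖ ^ α) :
    dimF μ 1 ≤ (1 + ENNReal.ofReal ((d : ℝ) / (2 * α))) * dimF μ 0 + (d : ℝ≥0∞) ∧
    (dimF μ 0 = 0 → dimF μ 1 ≤ (d : ℝ≥0∞)) := by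
  obtain ⟨C, hC, hHC⟩ := hHolder
  have hSobolev : dimF μ 1 ≤ (1 + ENNReal.ofReal (d / (2 * α))) * dimF μ 0 + d := by
    refine iSup₂_le fun s hs => ?_
    rcases le_or_gt (s : ℝ) d with hsd | hsd
    · exact le_add_left (by exact_mod_cast hsd)
    calc (s : ℝ≥0∞) = (1 + ENNReal.ofReal (d / (2 * α))) *
          ENNReal.ofReal ((s - d) * (2 * α / (2 * α + d))) + d := by
          rw [← ENNReal.ofReal_coe_nnreal, ← ENNReal.ofReal_natCast,
            ofReal_eq_one_add_ofReal_div_mul_add (a := 2 * α) (by linarith [hα.1])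
              d.cast_nonneg hsd.le]
      _ ≤ _ := by
          gcongr
          exact ofReal_le_dimF_zero_of_energyJ_one_lt_top μ hC hα.1 hHC hsd.le hs
  exact ⟨hSobolev, fun h0 => by simpa [h0] using hSobolev⟩

/-- If the Fourier transform of a finite Borel measure `μ` on `ℝ^d`
is `α`-Hölder, then the Sobolev dimension satisfies
`dim_S μ ≤ (1 + d/(2α))·dim_F μ + d`; in particular `dim_F μ = 0 → dim_S μ ≤ d`. -/
theorem statement4 {d : ℕ} (hd : 1 ≤ d) (μ : Measure (Ed d)) [IsFiniteMeasure μ]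
    (α : ℝ) (hα : α ∈ Set.Ioc (0:ℝ) 1)
    (hHolder : ∃ C : ℝ, 0 < C ∧ ∀ x y : Ed d,
      ‖ftm μ x - ftm μ y‖ ≤ C * ‖x - y‖ ^ α) :
    dimF μ 1 ≤ (1 + ENNReal.ofReal ((d : ℝ) / (2 * α))) * dimF μ 0 + (d : ℝ≥0∞) ∧
    (dimF μ 0 = 0 → dimF μ 1 ≤ (d : ℝ≥0∞)) :=
  statement4_general μ α hα hHolder

end
end

section
/- Let μ be a finite Borel measure on ℝ^d. Then for all θ ∈ [0,1] and all integers k ≥ 1, dim_F^θ (μ^{∗k}) = k·dim_F^{θ/k} μ, where μ^{∗k} is the k-fold convolution of μ with itself. In particular, dim_S (μ^{∗k}) = k·dim_F^{1/k} μ. -/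
open MeasureTheory Filter Set
open scoped ENNReal NNReal

noncomputable section

/-- The convolution of two measures on `ℝ^d`. -/
noncomputable def mconv {d : ℕ} (μ ν : Measure (Ed d)) : Measure (Ed d) :=
  Measure.map (fun q : Ed d × Ed d => q.1 + q.2) (μ.prod ν)

/-- The `k`-fold convolution power `μ^{∗k}` (with `μ^{∗0} = δ₀`). -/
noncomputable def convPow {d : ℕ} (μ : Measure (Ed d)) : ℕ → Measure (Ed d)
  | 0 => Measure.dirac 0
  | n + 1 => mconv (convPow μ n) μ

/-!
The Fourier transform turns convolution into multiplication, so `|(μ^{∗k})^| = |μ̂|^k`, and the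
integrand of `J_{s,θ}(μ^{∗k})` is exactly that of `J_{s/k,θ/k}(μ)`. Hence
`J_{s,θ}(μ^{∗k}) = J_{s/k,θ/k}(μ)^k`, so the exponents `s` of finite energy for `μ^{∗k}` at `θ` are
exactly `k` times those of `μ` at `θ/k`.
-/

instance {d : ℕ} (μ : Measure (Ed d)) [SFinite μ] (k : ℕ) : SFinite (convPow μ k) := by
  induction k with
  | zero => exact inferInstanceAs (SFinite (Measure.dirac (0 : Ed d)))
  | succ n ih => exact inferInstanceAs (SFinite (Measure.map _ _))

lemma ftm_mconv {d : ℕ} (ν μ : Measure (Ed d)) [SFinite ν] [SFinite μ] (z : Ed d) :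
    ftm (mconv ν μ) z = ftm ν z * ftm μ z := by
  set e : Ed d → ℂ := fun x => Complex.exp (Complex.I * (-2 * Real.pi * (inner ℝ z x : ℝ)))
  have he_add : ∀ x y, e (x + y) = e x * e y := by
    intro x y
    simp only [e, ← Complex.exp_add, inner_add_right]
    push_cast
    ring_nf
  have he_cont : Continuous e := by fun_prop
  calc ftm (mconv ν μ) z = ∫ q : Ed d × Ed d, e q.1 * e q.2 ∂ν.prod μ := by
        rw [ftm, mconv, integral_map (by fun_prop) he_cont.aestronglyMeasurable]
        simp only [he_add]
    _ = ftm ν z * ftm μ z := integral_prod_mul e e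

lemma ftm_convPow {d : ℕ} (μ : Measure (Ed d)) [SFinite μ] (k : ℕ) (z : Ed d) :
    ftm (convPow μ k) z = ftm μ z ^ k := by
  induction k with
  | zero => simp [convPow, ftm]
  | succ n ih => rw [convPow, ftm_mconv, ih, pow_succ]

theorem energyJ_convPow {d : ℕ} (μ : Measure (Ed d)) [SFinite μ] {k : ℕ} (hk : k ≠ 0)
    (s θ : ℝ) : energyJ (convPow μ k) s θ = energyJ μ (s / k) (θ / k) ^ k := by
  have hkR : (k : ℝ) ≠ 0 := Nat.cast_ne_zero.mpr hk
  have hnorm : ∀ z, ‖ftm (convPow μ k) z‖ = ‖ftm μ z‖ ^ k := by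
    simp [ftm_convPow, norm_pow]
  rcases eq_or_ne θ 0 with rfl | hθ
  · simp only [energyJ, zero_div, if_true, ENNReal.iSup_pow_of_ne_zero hk]
    refine iSup_congr fun z => ?_
    rw [← ENNReal.ofReal_pow (by positivity), hnorm, mul_pow, ← pow_mul, ← pow_mul',
      ← Real.rpow_mul_natCast (norm_nonneg z), div_mul_cancel₀ s hkR]
  · have hint : ∀ z : Ed d, ‖ftm (convPow μ k) z‖ ^ (2 / θ) * ‖z‖ ^ (s / θ - d)
        = ‖ftm μ z‖ ^ (2 / (θ / k)) * ‖z‖ ^ (s / k / (θ / k) - d) := by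
      intro z
      rw [hnorm, ← Real.rpow_natCast, ← Real.rpow_mul (norm_nonneg _),
        show (k : ℝ) * (2 / θ) = 2 / (θ / k) by field_simp,
        show s / θ - d = s / k / (θ / k) - d by field_simp]
    rw [energyJ, energyJ, if_neg hθ, if_neg (div_ne_zero hθ hkR), ← ENNReal.rpow_mul_natCast,
      div_mul_cancel₀ θ hkR]
    simp only [hint]

theorem iSup_coe_of_div_eq_mul (P : ℝ≥0 → Prop) {c : ℝ≥0} (hc : c ≠ 0) :
    ⨆ (s : ℝ≥0) (_ : P (s / c)), (s : ℝ≥0∞) = c * ⨆ (t : ℝ≥0) (_ : P t), (t : ℝ≥0∞) := by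
  rw [← (Equiv.mulLeft₀ c hc).iSup_comp]
  simp only [Equiv.mulLeft₀_apply, mul_div_cancel_left₀ _ hc, ENNReal.coe_mul, ENNReal.mul_iSup]

theorem dimF_convPow {d : ℕ} (μ : Measure (Ed d)) [SFinite μ] {k : ℕ} (hk : k ≠ 0) (θ : ℝ) :
    dimF (convPow μ k) θ = k * dimF μ (θ / k) := by
  have hfin : ∀ s : ℝ≥0,
      energyJ (convPow μ k) s θ < ⊤ ↔ energyJ μ ↑(s / (k : ℝ≥0)) (θ / k) < ⊤ := by
    intro s
    simp [energyJ_convPow μ hk, ENNReal.pow_lt_top_iff, hk]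
  simp only [dimF, hfin]
  exact_mod_cast iSup_coe_of_div_eq_mul (fun t : ℝ≥0 => energyJ μ t (θ / k) < ⊤)
    (Nat.cast_ne_zero.mpr hk)

theorem statement14_general {d : ℕ} (μ : Measure (Ed d)) [IsFiniteMeasure μ]
    (k : ℕ) (hk : 1 ≤ k) :
    (∀ θ ∈ Set.Icc (0:ℝ) 1,
      dimF (convPow μ k) θ = (k : ℝ≥0∞) * dimF μ (θ / k)) ∧
    dimF (convPow μ k) 1 = (k : ℝ≥0∞) * dimF μ (1 / k) := by
  have hk0 : k ≠ 0 := Nat.one_le_iff_ne_zero.mp hk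
  exact ⟨fun θ _ => dimF_convPow μ hk0 θ, dimF_convPow μ hk0 1⟩

/-- For a finite Borel measure `μ` on `ℝ^d`, all `θ ∈ [0,1]` and all
integers `k ≥ 1`: `dim_F^θ (μ^{∗k}) = k·dim_F^{θ/k} μ`; in particular
`dim_S (μ^{∗k}) = k·dim_F^{1/k} μ`. -/
theorem statement14 {d : ℕ} (hd : 1 ≤ d) (μ : Measure (Ed d)) [IsFiniteMeasure μ]
    (k : ℕ) (hk : 1 ≤ k) :
    (∀ θ ∈ Set.Icc (0:ℝ) 1,
      dimF (convPow μ k) θ = (k : ℝ≥0∞) * dimF μ (θ / k)) ∧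
    dimF (convPow μ k) 1 = (k : ℝ≥0∞) * dimF μ (1 / k) :=
  statement14_general μ k hk

end
end
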